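/- Let S be a minimal algebraic surface of general type with K_S² = 1, p_g(S) = 1 and q(S) = 0. Then |2K_S| cannot be composed of a pencil; equivalently, there is no decomposition 2K_S ~ C₁ + C₂ + Z with C₁, C₂ algebraically equivalent moving curves and Z effective such that the bicanonical image is a curve. -/
import Mathlib


/-- Proposition 4.7. Divisors on the minimal surface `S` of
general type with `K² = 1`, `p_g = 1` (`h⁰(K) = 1`), `q = 0` are modeled
abstractly with intersection form, numerical/linear/algebraic equivalence and
effectivity; the hypotheses record the standard facts used in the proof:
nefness of `K`, `2g(C) − 2 = K·C + C² ≥ 2` for a curve `C` moving in a pencil,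
the Hodge index theorem with its equality case, torsion-freeness of `Pic(S)`
(Bombieri), and invariance of `h⁰` and of intersection numbers under the
equivalences. Conclusion: `|2K_S|` is not composed of a pencil, i.e. there is
no decomposition `2K_S ~ C₁ + C₂ + Z` with `C₁, C₂` algebraically equivalent
moving curves (`h⁰(C₁) ≥ 2`) and `Z` effective. -/
theorem stmt_11 (Div : Type*) [AddCommGroup Div]
    (inter : Div → Div → ℤ)
    (hsymm : ∀ D E, inter D E = inter E D)
    (haddl : ∀ D E F, inter (D + E) F = inter D F + inter E F)
    (hsmul : ∀ D E, ∀ n : ℤ, inter (n • D) E = n * inter D E)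
    (K : Div) (h0 : Div → ℕ)
    (q : ℤ) (hq : q = 0)
    (Curve Effective : Div → Prop)
    (numeq lineq algeq : Div → Div → Prop)
    (hK2 : inter K K = 1) (hpg : h0 K = 1)
    (hKnef : ∀ C, Curve C → 0 ≤ inter K C)
    (hKeff : ∀ Z, Effective Z → 0 ≤ inter K Z)
    (hgenus : ∀ C, Curve C → 2 ≤ inter K C + inter C C)
    (hindex : ∀ C, Curve C → inter K K * inter C C ≤ inter K C ^ 2)
    (hindexEq : ∀ C, Curve C → 0 < inter C C →
      inter K K * inter C C = inter K C ^ 2 → numeq K C)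
    (htorsfree : ∀ D E, numeq D E → lineq D E)
    (hlin_h0 : ∀ D E, lineq D E → h0 D = h0 E)
    (hlin_int : ∀ D E, lineq D E → ∀ F, inter D F = inter E F)
    (halg_int : ∀ D E, algeq D E → ∀ F, inter D F = inter E F) :
    ¬ ∃ C₁ C₂ Z, Curve C₁ ∧ Curve C₂ ∧ algeq C₁ C₂ ∧ Effective Z ∧
      lineq ((2 : ℤ) • K) (C₁ + C₂ + Z) ∧ 2 ≤ h0 C₁ := by
  rintro ⟨C₁, C₂, Z, hC₁, hC₂, halg, hZ, hlin, hh0⟩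
  have key : inter ((2:ℤ) • K) K = inter (C₁ + C₂ + Z) K := hlin_int _ _ hlin K
  rw [hsmul, hK2, haddl, haddl] at key
  have e12 : inter C₁ K = inter C₂ K := halg_int _ _ halg K
  have s1 : inter K C₁ = inter C₁ K := hsymm K C₁
  have s2 : inter K C₂ = inter C₂ K := hsymm K C₂
  have sZ : inter K Z = inter Z K := hsymm K Z
  have hn1 : 0 ≤ inter K C₁ := hKnef _ hC₁
  have hn2 : 0 ≤ inter K C₂ := hKnef _ hC₂
  have hnZ : 0 ≤ inter K Z := hKeff _ hZ
  have hg1 : 2 ≤ inter K C₁ + inter C₁ C₁ := hgenus _ hC₁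
  have hi1 : inter K K * inter C₁ C₁ ≤ inter K C₁ ^ 2 := hindex _ hC₁
  rw [hK2] at hi1
  -- K·C₁ ≥ 1
  have hge1 : 1 ≤ inter K C₁ := by
    rcases lt_or_ge (inter K C₁) 1 with h | h
    · exfalso
      have h0' : inter K C₁ = 0 := le_antisymm (by omega) hn1
      rw [h0'] at hi1 hg1
      simp at hi1
      omega
    · exact h
  have hKC1 : inter K C₁ = 1 := by omega
  have hC11 : inter C₁ C₁ = 1 := by
    rw [hKC1] at hi1 hg1; omega
  have hnum : numeq K C₁ := hindexEq _ hC₁ (by omega) (by rw [hK2, hC11, hKC1]; ring)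
  have := hlin_h0 _ _ (htorsfree _ _ hnum)
  omega
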